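/- arXiv:2404.01504 — 3 statements merged into one kernel-verified Lean document; each statement's English description precedes it below -/
import Mathlib

section
/- For every d ≥ 3 there exists M > 0 such that every nonzero finite Borel measure on ℝ^d whose support is contained in the tail of the moment curve Γ = {γ(t) : t ≥ M} admits no orthogonal equipartition by d mutually orthogonal hyperplanes. -/
open MeasureTheory
open scoped InnerProductSpace

/-- The moment curve in `ℝ^d`: `γ(t) = (t, t², …, t^d)`. -/
noncomputable def momentCurve (d : ℕ) : ℝ → EuclideanSpace ℝ (Fin d) :=
  fun t => WithLp.toLp 2 (fun i => t ^ ((i : ℕ) + 1))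

open Filter Set

namespace NOE

/-- Evaluation of a polynomial with coefficients `b` (degree `< D`). -/
noncomputable def E (D : ℕ) (b : ℕ → ℝ) (x : ℝ) : ℝ := ∑ j ∈ Finset.range D, b j * x ^ j

/-- Coefficients of the derivative. -/
noncomputable def dC (b : ℕ → ℝ) : ℕ → ℝ := fun j => ((j : ℝ) + 1) * b (j + 1)

lemma dC_zero {D : ℕ} {b : ℕ → ℝ} (hb : ∀ j, D ≤ j → b j = 0) :
    ∀ j, D ≤ j → dC b j = 0 := by
  intro j hj
  simp [dC, hb (j+1) (by omega)]

lemma dC_iter_zero {D : ℕ} {b : ℕ → ℝ} (hb : ∀ j, D ≤ j → b j = 0) (s : ℕ) :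
    ∀ j, D ≤ j → (dC^[s] b) j = 0 := by
  induction s with
  | zero => simpa using hb
  | succ s ih =>
      rw [Function.iterate_succ_apply']
      exact dC_zero ih

lemma hasDerivAt_E {D : ℕ} {b : ℕ → ℝ} (hb : ∀ j, D ≤ j → b j = 0) (x : ℝ) :
    HasDerivAt (fun y => E D b y) (E D (dC b) x) x := by
  have h : HasDerivAt (fun y => E D b y)
      (∑ j ∈ Finset.range D, b j * ((j : ℝ) * x ^ (j - 1))) x := by
    apply HasDerivAt.fun_sum
    intro j _
    exact (hasDerivAt_pow j x).const_mul (b j)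
  convert h using 1
  rcases Nat.eq_zero_or_pos D with hD | hD
  · simp [E, hD]
  · obtain ⟨D', rfl⟩ : ∃ D', D = D' + 1 := ⟨D - 1, by omega⟩
    have htop : dC b D' = 0 := by simp [dC, hb (D' + 1) le_rfl]
    rw [Finset.sum_range_succ' (fun j => b j * ((j : ℝ) * x ^ (j - 1))) D']
    rw [E, Finset.sum_range_succ, htop]
    have h0 : b 0 * ((0 : ℕ) * x ^ (0 - 1)) = 0 := by simp
    rw [h0]
    simp only [zero_mul, add_zero]
    apply Finset.sum_congr rfl
    intro j _
    simp only [dC, Nat.add_sub_cancel]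
    push_cast
    ring

/-- `k` sorted roots of `g` in set `S`. -/
def SortedRoots (g : ℝ → ℝ) (k : ℕ) (S : Set ℝ) : Prop :=
  ∃ r : ℕ → ℝ, (∀ a b, a < b → b < k → r a < r b) ∧ ∀ a, a < k → r a ∈ S ∧ g (r a) = 0

/-- Rolle chain: `m` sorted roots of `g` give `m-1` sorted roots of `g'`,
each inside consecutive intervals. -/
lemma rolle_step {g g' : ℝ → ℝ} (hg : ∀ x, HasDerivAt g (g' x) x) {m : ℕ} {r : ℕ → ℝ}
    (hmono : ∀ a b, a < b → b < m → r a < r b) (hroot : ∀ a, a < m → g (r a) = 0) :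
    ∃ r' : ℕ → ℝ, (∀ a b, a < b → b < m - 1 → r' a < r' b) ∧
      ∀ a, a < m - 1 → r' a ∈ Set.Ioo (r a) (r (a + 1)) ∧ g' (r' a) = 0 := by
  have H : ∀ a : ℕ, ∃ x : ℝ, a < m - 1 → x ∈ Set.Ioo (r a) (r (a + 1)) ∧ g' x = 0 := by
    intro a
    by_cases ha : a < m - 1
    · have hab : r a < r (a + 1) := hmono a (a + 1) (by omega) (by omega)
      have hcont : ContinuousOn g (Set.Icc (r a) (r (a + 1))) :=
        fun x _ => ((hg x).continuousAt).continuousWithinAt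
      have hI : g (r a) = g (r (a + 1)) := by
        rw [hroot a (by omega), hroot (a + 1) (by omega)]
      obtain ⟨c, hc, hc0⟩ := exists_hasDerivAt_eq_zero hab hcont hI (fun x _ => hg x)
      exact ⟨c, fun _ => ⟨hc, hc0⟩⟩
    · exact ⟨0, fun h => absurd h ha⟩
  choose r' hr' using H
  refine ⟨r', ?_, fun a ha => hr' a ha⟩
  intro a b hab hb
  have h1 := (hr' a (by omega)).1
  have h2 := (hr' b hb).1
  have h3 : r (a + 1) ≤ r b := by
    rcases eq_or_lt_of_le (show a + 1 ≤ b by omega) with h | h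
    · rw [h]
    · exact le_of_lt (hmono (a + 1) b h (by omega))
  exact lt_of_lt_of_le h1.2 (le_trans h3 (le_of_lt h2.1))

/-- Iterated Rolle on the `E`-side, staying in `Ioc 0 ε`. -/
lemma sortedRoots_iter {D : ℕ} {b : ℕ → ℝ} (hb : ∀ j, D ≤ j → b j = 0) {ℓ : ℕ} {ε : ℝ}
    (h : SortedRoots (E D b) ℓ (Set.Ioc 0 ε)) (s : ℕ) :
    SortedRoots (E D (dC^[s] b)) (ℓ - s) (Set.Ioc 0 ε) := by
  induction s generalizing b ℓ with
  | zero => simpa using h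
  | succ s ih =>
      obtain ⟨r, hmono, hr⟩ := h
      obtain ⟨r', hmono', hr'⟩ := rolle_step (hasDerivAt_E hb) hmono (fun a ha => (hr a ha).2)
      have hnext : SortedRoots (E D (dC b)) (ℓ - 1) (Set.Ioc 0 ε) := by
        refine ⟨r', hmono', fun a ha => ⟨?_, (hr' a ha).2⟩⟩
        have h1 := (hr' a ha).1
        have ha1 := (hr a (by omega)).1
        have ha2 := (hr (a + 1) (by omega)).1
        exact ⟨lt_trans ha1.1 h1.1, le_trans (le_of_lt h1.2) ha2.2⟩
      have := ih (dC_zero hb) hnext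
      rw [← Function.iterate_succ_apply] at this
      have heq : ℓ - 1 - s = ℓ - (s + 1) := by omega
      rwa [heq] at this

/-- Formula for iterated derivative coefficients. -/
lemma dC_iter_apply (b : ℕ → ℝ) (s j : ℕ) :
    (dC^[s] b) j = (∏ k ∈ Finset.range s, ((j : ℝ) + k + 1)) * b (j + s) := by
  induction s generalizing b j with
  | zero => simp
  | succ s ih =>
      rw [Function.iterate_succ_apply, ih]
      have hd : dC b (j + s) = ((j : ℝ) + s + 1) * b (j + s + 1) := by
        simp only [dC]; push_cast; ring_nf
      rw [hd, Finset.prod_range_succ, mul_assoc, ← Nat.add_assoc]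

lemma dC_iter_apply_zero (b : ℕ → ℝ) (s : ℕ) :
    (dC^[s] b) 0 = (∏ k ∈ Finset.range s, ((k : ℝ) + 1)) * b s := by
  rw [dC_iter_apply]; simp

/-- Limit lemma: coefficients tending to a limit, with `ℓ` roots in `Ioc 0 (ε n)`, `ε → 0`,
force the bottom `ℓ` limit coefficients to vanish. -/
lemma lim_coeff {D ℓ : ℕ} {b : ℕ → ℕ → ℝ} {bl : ℕ → ℝ}
    (hb : ∀ n j, D ≤ j → b n j = 0)
    (htend : ∀ j, Tendsto (fun n => b n j) atTop (nhds (bl j)))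
    {ε : ℕ → ℝ} (hε : ∀ n, 0 < ε n) (hε0 : Tendsto ε atTop (nhds 0))
    (hroots : ∀ n, SortedRoots (E D (b n)) ℓ (Set.Ioc 0 (ε n))) :
    ∀ j, j < ℓ → bl j = 0 := by
  intro j hj
  -- coefficients of iterated derivatives converge
  have htend' : ∀ s j', Tendsto (fun n => (dC^[s] (b n)) j') atTop (nhds ((dC^[s] bl) j')) := by
    intro s j'
    simp only [dC_iter_apply]
    exact ((htend (j' + s)).const_mul _)
  by_cases hjD : D ≤ j
  · have : Tendsto (fun n => b n j) atTop (nhds 0) := by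
      simpa [hb _ _ hjD] using tendsto_const_nhds (α := ℕ) (a := (0:ℝ))
    exact tendsto_nhds_unique (htend j) this
  -- get a root of the j-th iterated derivative, tending to 0
  push_neg at hjD
  have hroot : ∀ n, ∃ y : ℝ, y ∈ Set.Ioc 0 (ε n) ∧ E D (dC^[j] (b n)) y = 0 := by
    intro n
    obtain ⟨r, hmono, hr⟩ := sortedRoots_iter (hb n) (hroots n) j
    exact ⟨r 0, (hr 0 (by omega)).1, (hr 0 (by omega)).2⟩
  choose y hy hy0 using hroot
  have hytend : Tendsto y atTop (nhds 0) :=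
    squeeze_zero (fun n => le_of_lt (hy n).1) (fun n => (hy n).2) hε0
  -- evaluation tends to evaluation at the limit
  have heval : Tendsto (fun n => E D (dC^[j] (b n)) (y n)) atTop
      (nhds (E D (dC^[j] bl) 0)) := by
    unfold E
    apply tendsto_finset_sum
    intro j' _
    exact (htend' j j').mul (hytend.pow j')
  have h0 : E D (dC^[j] bl) 0 = 0 := by
    refine tendsto_nhds_unique heval ?_
    simpa [hy0] using tendsto_const_nhds (α := ℕ) (a := (0:ℝ))
  -- evaluate at 0
  have hE0 : E D (dC^[j] bl) 0 = (dC^[j] bl) 0 := by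
    unfold E
    rw [Finset.sum_eq_single 0]
    · simp
    · intro k _ hk
      simp [zero_pow hk]
    · intro h
      simp only [Finset.mem_range] at h
      omega
  rw [hE0, dC_iter_apply_zero] at h0
  have hprod : (∏ k ∈ Finset.range j, ((k : ℝ) + 1)) ≠ 0 := by
    apply ne_of_gt
    apply Finset.prod_pos
    intro k _
    positivity
  have := mul_eq_zero.mp h0
  tauto
lemma gauss_lt (d : ℕ) (hd : 3 ≤ d) : ∑ k ∈ Finset.range d, (k + 1) < 2 ^ d - 1 := by
  induction d with
  | zero => omega
  | succ n ih =>
      rcases Nat.lt_or_ge n 3 with h3 | h3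
      · interval_cases n
        · omega
        · omega
        · decide
      · have h2 : n < 2 ^ n := Nat.lt_two_pow_self
        rw [Finset.sum_range_succ, pow_succ]
        have := ih (by omega)
        omega

/-- Combinatorial conclusion: orthonormal vectors with coordinate support constraints
coming from root counts force `∑ m i ≤ d(d+1)/2 < 2^d - 1`. -/
lemma comb (d : ℕ) (hd : 3 ≤ d) (u : Fin d → EuclideanSpace ℝ (Fin d))
    (hon : Orthonormal ℝ u) (m : Fin d → ℕ)
    (hsum : ∑ i, m i = 2 ^ d - 1)
    (hsupp : ∀ i, ∀ j : Fin d, d + 1 ≤ (j : ℕ) + m i → u i j = 0) : False := by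
  classical
  set σ := Tuple.sort m with hσ
  have hmono : Monotone (m ∘ σ) := Tuple.monotone_sort m
  -- main bound: m (σ r) ≤ r + 1
  have hbound : ∀ r : Fin d, m (σ r) ≤ (r : ℕ) + 1 := by
    intro r
    set K : ℕ := d + 1 - m (σ r) with hK
    -- the subspace of vectors supported on coordinates < K
    set W : Submodule ℝ (EuclideanSpace ℝ (Fin d)) :=
      { carrier := {x | ∀ j : Fin d, d + 1 ≤ (j : ℕ) + m (σ r) → x j = 0}
        add_mem' := by
          intro x y hx hy j hj
          have : (x + y) j = x j + y j := rfl
          rw [this, hx j hj, hy j hj, add_zero]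
        zero_mem' := by intro j hj; rfl
        smul_mem' := by
          intro a x hx j hj
          have : (a • x) j = a * x j := rfl
          rw [this, hx j hj, mul_zero] } with hW
    -- index type
    let g : Fin (d - (r : ℕ)) → Fin d := fun a => σ ⟨(r : ℕ) + (a : ℕ), by omega⟩
    have hginj : Function.Injective g := by
      intro a b hab
      have := σ.injective hab
      have := Fin.val_eq_val _ _ |>.mpr this
      simp only [Fin.val_mk] at this
      exact Fin.ext (by omega)
    have hli : LinearIndependent ℝ (u ∘ g) := (hon.comp g hginj).linearIndependent
    -- each u (g a) lies in W
    have hmem : ∀ a, u (g a) ∈ W := by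
      intro a j hj
      apply hsupp
      have hle : m (σ r) ≤ m (g a) := by
        apply hmono
        show r ≤ (⟨(r : ℕ) + (a : ℕ), _⟩ : Fin d)
        rw [Fin.le_def]
        simp
      omega
    -- index set J of free coordinates
    let J := {j : Fin d // (j : ℕ) + m (σ r) ≤ d}
    let π : EuclideanSpace ℝ (Fin d) →ₗ[ℝ] (J → ℝ) :=
      { toFun := fun x => fun j => x j.1
        map_add' := fun x y => rfl
        map_smul' := fun a x => rfl }
    have hdisj : Disjoint (Submodule.span ℝ (Set.range (u ∘ g))) (LinearMap.ker π) := by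
      rw [Submodule.disjoint_def]
      intro x hx hker
      have hxW : x ∈ W := by
        have : Submodule.span ℝ (Set.range (u ∘ g)) ≤ W := by
          rw [Submodule.span_le]
          rintro _ ⟨a, rfl⟩
          exact hmem a
        exact this hx
      have hker' : π x = 0 := by simpa using hker
      ext j
      by_cases hj : d + 1 ≤ (j : ℕ) + m (σ r)
      · exact hxW j hj
      · have : x j = π x ⟨j, by omega⟩ := rfl
        rw [this, hker']
        rfl
    have hli2 : LinearIndependent ℝ (π ∘ (u ∘ g)) := hli.map hdisj
    have hcard : Fintype.card (Fin (d - (r : ℕ))) ≤ Module.finrank ℝ (J → ℝ) :=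
      hli2.fintype_card_le_finrank
    have hJ : Fintype.card J ≤ K := by
      have : Function.Injective (fun j : J => (⟨(j.1 : ℕ), by omega⟩ : Fin K)) := by
        intro a b hab
        simp only [Fin.mk.injEq] at hab
        exact Subtype.ext (Fin.ext hab)
      simpa using Fintype.card_le_of_injective _ this
    rw [Fintype.card_fin, Module.finrank_pi] at hcard
    have hr := r.2
    omega
  -- sum up
  have h1 : ∑ i, m i = ∑ r : Fin d, m (σ r) := (Equiv.sum_comp σ m).symm
  have h2 : ∑ r : Fin d, m (σ r) ≤ ∑ r : Fin d, ((r : ℕ) + 1) :=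
    Finset.sum_le_sum fun r _ => hbound r
  have h3 : ∑ r : Fin d, ((r : ℕ) + 1) = ∑ k ∈ Finset.range d, (k + 1) := by
    exact Fin.sum_univ_eq_sum_range (fun k => k + 1) d
  have := gauss_lt d hd
  omega
/-- From all `2^d` sign patterns realized at points `≥ M`, produce `2^d - 1` sorted
"roots" of the continuous functions `f i`, each strictly above `M`. -/
lemma patterns_to_roots (d : ℕ) (hd1 : 0 < d) (M : ℝ) (f : Fin d → ℝ → ℝ) (hf : ∀ i, Continuous (f i))
    (T : (Fin d → Bool) → ℝ) (hTM : ∀ σ, M ≤ T σ)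
    (hT : ∀ σ i, 0 < (if σ i then (1 : ℝ) else -1) * f i (T σ)) :
    ∃ (I : ℕ → Fin d) (R : ℕ → ℝ),
      (∀ k l, k < l → l < 2 ^ d - 1 → R k < R l) ∧
      (∀ k, k < 2 ^ d - 1 → M < R k ∧ f (I k) (R k) = 0) := by
  classical
  have h2d : 1 ≤ 2 ^ d := Nat.one_le_two_pow
  have hTinj : Function.Injective T := by
    intro σ σ' h
    by_contra hne
    obtain ⟨i, hi⟩ := Function.ne_iff.mp hne
    have h1 := hT σ i
    have h2 := hT σ' i
    rw [h] at h1
    rcases Bool.eq_false_or_eq_true (σ i) with hb | hb <;>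
      rcases Bool.eq_false_or_eq_true (σ' i) with hb' | hb' <;>
        simp [hb, hb'] at h1 h2 hi <;> linarith
  set pts : Finset ℝ := Finset.image T Finset.univ with hpts
  have hcard : pts.card = 2 ^ d := by
    rw [hpts, Finset.card_image_of_injective _ hTinj, Finset.card_univ]
    simp [Fintype.card_fun]
  set e := pts.orderIsoOfFin hcard with he
  -- totalized enumeration
  set E' : ℕ → ℝ := fun k => if h : k < 2 ^ d then (e ⟨k, h⟩ : ℝ) else 0 with hE'
  have hE'mono : ∀ k l, k < l → l < 2 ^ d → E' k < E' l := by
    intro k l hkl hl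
    rw [hE']
    simp only [dif_pos hl, dif_pos (show k < 2 ^ d by omega)]
    exact_mod_cast e.strictMono (by simp [Fin.lt_def]; omega)
  have hE'mem : ∀ k, k < 2 ^ d → (E' k) ∈ pts := by
    intro k hk
    rw [hE']
    simp only [dif_pos hk]
    exact (e ⟨k, hk⟩).2
  have hE'M : ∀ k, k < 2 ^ d → M ≤ E' k := by
    intro k hk
    obtain ⟨σ, _, hσ⟩ := Finset.mem_image.mp (hE'mem k hk)
    rw [← hσ]; exact hTM σ
  -- for each consecutive pair, a root in between
  have hgap : ∀ k : ℕ, ∃ (i : Fin d) (x : ℝ), k < 2 ^ d - 1 →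
      E' k < x ∧ x < E' (k + 1) ∧ f i x = 0 := by
    intro k
    by_cases hk : k < 2 ^ d - 1
    · obtain ⟨σ, _, hσ⟩ := Finset.mem_image.mp (hE'mem k (by omega))
      obtain ⟨σ', _, hσ'⟩ := Finset.mem_image.mp (hE'mem (k + 1) (by omega))
      have hlt : E' k < E' (k + 1) := hE'mono k (k + 1) (by omega) (by omega)
      have hσne : σ ≠ σ' := by
        intro h
        have : E' k = E' (k + 1) := by rw [← hσ, ← hσ', h]
        exact absurd this (ne_of_lt hlt)
      obtain ⟨i, hi⟩ := Function.ne_iff.mp hσne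
      -- f i has opposite strict signs at E' k and E' (k+1)
      have h1 := hT σ i
      have h2 := hT σ' i
      rw [hσ] at h1
      rw [hσ'] at h2
      have hcont : ContinuousOn (f i) (Set.Icc (E' k) (E' (k + 1))) :=
        (hf i).continuousOn
      have : ∃ x, x ∈ Set.Ioo (E' k) (E' (k + 1)) ∧ f i x = 0 := by
        rcases Bool.eq_false_or_eq_true (σ i) with hb | hb <;>
          rcases Bool.eq_false_or_eq_true (σ' i) with hb' | hb' <;>
            simp [hb, hb'] at h1 h2 hi
        · -- f i (E' k) > 0 > f i (E' (k+1))
          have hmem : (0 : ℝ) ∈ Set.Ioo (f i (E' (k + 1))) (f i (E' k)) := by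
            constructor <;> linarith
          obtain ⟨x, hx, hx0⟩ := intermediate_value_Ioo' (le_of_lt hlt) hcont hmem
          exact ⟨x, hx, hx0⟩
        · -- f i (E' k) < 0 < f i (E' (k+1))
          have hmem : (0 : ℝ) ∈ Set.Ioo (f i (E' k)) (f i (E' (k + 1))) := by
            constructor <;> linarith
          obtain ⟨x, hx, hx0⟩ := intermediate_value_Ioo (le_of_lt hlt) hcont hmem
          exact ⟨x, hx, hx0⟩
      obtain ⟨x, hx, hx0⟩ := this
      exact ⟨i, x, fun _ => ⟨hx.1, hx.2, hx0⟩⟩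
    · exact ⟨⟨0, hd1⟩, 0, fun h => absurd h hk⟩
  choose I R hIR using hgap
  refine ⟨I, R, ?_, ?_⟩
  · intro k l hkl hl
    have h1 := hIR k (by omega)
    have h2 := hIR l hl
    have h3 : E' (k + 1) ≤ E' l := by
      rcases eq_or_lt_of_le (show k + 1 ≤ l by omega) with h | h
      · rw [h]
      · exact le_of_lt (hE'mono (k + 1) l h (by omega))
    calc R k < E' (k + 1) := h1.2.1
      _ ≤ E' l := h3
      _ < R l := h2.1
  · intro k hk
    have h1 := hIR k hk
    exact ⟨lt_of_le_of_lt (hE'M k (by omega)) h1.1, h1.2.2⟩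
/-- Coefficients of a vector, as a function on `ℕ`. -/
noncomputable def A (d : ℕ) (v : EuclideanSpace ℝ (Fin d)) : ℕ → ℝ :=
  fun e => if h : e < d then v ⟨e, h⟩ else 0

/-- The affine polynomial function of the hyperplane along the moment curve. -/
noncomputable def P (d : ℕ) (v : EuclideanSpace ℝ (Fin d)) (c : ℝ) : ℝ → ℝ :=
  fun t => (∑ e ∈ Finset.range d, A d v e * t ^ (e + 1)) - c

/-- Its derivative. -/
noncomputable def Q (d : ℕ) (v : EuclideanSpace ℝ (Fin d)) : ℝ → ℝ :=
  fun t => ∑ e ∈ Finset.range d, ((e : ℝ) + 1) * A d v e * t ^ e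

/-- Reversed coefficients of `Q`. -/
noncomputable def brev (d : ℕ) (v : EuclideanSpace ℝ (Fin d)) : ℕ → ℝ :=
  fun e => if e < d then ((d - e : ℕ) : ℝ) * A d v (d - 1 - e) else 0

lemma brev_zero (d : ℕ) (v : EuclideanSpace ℝ (Fin d)) :
    ∀ j, d ≤ j → brev d v j = 0 := by
  intro j hj; simp [brev, Nat.not_lt.mpr hj]

lemma inner_momentCurve (d : ℕ) (v : EuclideanSpace ℝ (Fin d)) (t : ℝ) :
    ⟪momentCurve d t, v⟫_ℝ = ∑ e ∈ Finset.range d, A d v e * t ^ (e + 1) := by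
  rw [PiLp.inner_apply]
  rw [← Fin.sum_univ_eq_sum_range (fun e => A d v e * t ^ (e + 1)) d]
  apply Finset.sum_congr rfl
  intro i _
  simp only [RCLike.inner_apply, conj_trivial, momentCurve, PiLp.toLp_apply, A, dif_pos i.2, Fin.eta]

lemma continuous_P (d : ℕ) (v : EuclideanSpace ℝ (Fin d)) (c : ℝ) : Continuous (P d v c) := by
  unfold P
  exact (continuous_finset_sum _ fun e _ => continuous_const.mul (continuous_pow (e + 1))).sub
    continuous_const

lemma hasDerivAt_P (d : ℕ) (v : EuclideanSpace ℝ (Fin d)) (c : ℝ) (t : ℝ) :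
    HasDerivAt (P d v c) (Q d v t) t := by
  have h : HasDerivAt (P d v c)
      (∑ e ∈ Finset.range d, A d v e * (((e + 1 : ℕ) : ℝ) * t ^ ((e + 1) - 1))) t := by
    apply HasDerivAt.sub_const
    apply HasDerivAt.fun_sum
    intro e _
    exact (hasDerivAt_pow (e + 1) t).const_mul (A d v e)
  convert h using 1
  apply Finset.sum_congr rfl
  intro e _
  simp only [Nat.add_sub_cancel]
  push_cast
  ring

lemma brev_root (d : ℕ) (v : EuclideanSpace ℝ (Fin d)) {t : ℝ} (ht : 0 < t)
    (hQ : Q d v t = 0) : E d (brev d v) (1 / t) = 0 := by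
  have htne : t ≠ 0 := ne_of_gt ht
  have key : E d (brev d v) (1 / t) = (1 / t) ^ (d - 1) * Q d v t := by
    unfold E
    rw [← Finset.sum_range_reflect]
    unfold Q
    rw [Finset.mul_sum]
    apply Finset.sum_congr rfl
    intro j hj
    rw [Finset.mem_range] at hj
    have h1 : brev d v (d - 1 - j) = ((j + 1 : ℕ) : ℝ) * A d v j := by
      have hlt : d - 1 - j < d := by omega
      have e1 : d - (d - 1 - j) = j + 1 := by omega
      have e2 : d - 1 - (d - 1 - j) = j := by omega
      simp only [brev, if_pos hlt, e1, e2]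
    rw [h1]
    have hpow : (1 / t) ^ (d - 1 - j) = (1 / t) ^ (d - 1) * t ^ j := by
      have hk : (1 / t) ^ (d - 1) = (1 / t) ^ (d - 1 - j) * (1 / t) ^ j := by
        rw [← pow_add]; congr 1; omega
      rw [hk, mul_assoc, ← mul_pow, one_div_mul_cancel htne, one_pow, mul_one]
    rw [hpow]
    push_cast
    ring
  rw [key, hQ, mul_zero]

/-- **Key analytic lemma**: for `M` large, no `d` mutually orthogonal hyperplanes realize all
`2^d` sign patterns on the tail of the moment curve. -/
lemma key (d : ℕ) (hd : 3 ≤ d) :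
    ∃ M : ℝ, 0 < M ∧ ∀ (u : Fin d → EuclideanSpace ℝ (Fin d)) (c : Fin d → ℝ),
      (∀ i, ‖u i‖ = 1) → (∀ i j, i ≠ j → ⟪u i, u j⟫_ℝ = 0) →
      ∃ σ : Fin d → Bool, ∀ t : ℝ, M ≤ t →
        ∃ i, ¬ (0 < (if σ i then (1 : ℝ) else -1) * (⟪momentCurve d t, u i⟫_ℝ - c i)) := by
  classical
  by_contra hcon
  push_neg at hcon
  have H : ∀ n : ℕ, ∃ (u : Fin d → EuclideanSpace ℝ (Fin d)) (c : Fin d → ℝ),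
      (∀ i, ‖u i‖ = 1) ∧ (∀ i j, i ≠ j → ⟪u i, u j⟫_ℝ = 0) ∧
      ∀ σ : Fin d → Bool, ∃ t : ℝ, ((n : ℝ) + 1) ≤ t ∧
        ∀ i, 0 < (if σ i then (1 : ℝ) else -1) * (⟪momentCurve d t, u i⟫_ℝ - c i) := by
    intro n
    obtain ⟨u, c, h1, h2, h3⟩ := hcon ((n : ℝ) + 1) (by positivity)
    exact ⟨u, c, h1, h2, h3⟩
  choose u c hnorm horth hpat using H
  choose T hTM hTsign using hpat
  -- roots from sign patterns
  have hroots : ∀ n : ℕ, ∃ (I : ℕ → Fin d) (R : ℕ → ℝ),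
      (∀ k l, k < l → l < 2 ^ d - 1 → R k < R l) ∧
      (∀ k, k < 2 ^ d - 1 → ((n : ℝ) + 1) < R k ∧ P d (u n (I k)) (c n (I k)) (R k) = 0) := by
    intro n
    apply patterns_to_roots d (by omega) ((n : ℝ) + 1)
      (fun i => P d (u n i) (c n i)) (fun i => continuous_P d (u n i) (c n i)) (T n) (hTM n)
    intro σ i
    have := hTsign n σ i
    rwa [show ⟪momentCurve d (T n σ), u n i⟫_ℝ - c n i
        = P d (u n i) (c n i) (T n σ) by rw [inner_momentCurve]; rfl] at this
  choose I R hRmono hRprop using hroots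
  -- pigeonhole on the pattern of indices
  set V : ℕ → (Fin (2 ^ d - 1) → Fin d) := fun n k => I n (k : ℕ) with hV
  have hpigeon : ∃ w, ∃ᶠ n in atTop, V n = w := by
    by_contra hnot
    push_neg at hnot
    have h' : ∀ w, ∀ᶠ n in atTop, ¬ V n = w := fun w => (hnot w)
    obtain ⟨n, hn⟩ := (Filter.eventually_all.mpr h').exists
    exact hn (V n) rfl
  obtain ⟨w, hw⟩ := hpigeon
  obtain ⟨ψ, hψmono, hψ⟩ := Filter.extraction_of_frequently_atTop hw
  -- compactness of frames
  have hcomp : IsCompact (Set.univ.pi fun _ : Fin d =>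
      Metric.sphere (0 : EuclideanSpace ℝ (Fin d)) 1) :=
    isCompact_univ_pi fun _ => isCompact_sphere 0 1
  have hmem : ∀ n, u (ψ n) ∈ (Set.univ.pi fun _ : Fin d =>
      Metric.sphere (0 : EuclideanSpace ℝ (Fin d)) 1) := by
    intro n
    rw [Set.mem_univ_pi]
    intro i
    rw [mem_sphere_zero_iff_norm]
    exact hnorm (ψ n) i
  obtain ⟨U, hU, φ, hφmono, hUtend⟩ := hcomp.tendsto_subseq hmem
  set θ : ℕ → ℕ := ψ ∘ φ with hθdef
  have hθ : StrictMono θ := hψmono.comp hφmono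
  have hVθ : ∀ n, V (θ n) = w := fun n => hψ (φ n)
  have hcoord : ∀ i : Fin d, Tendsto (fun n => u (θ n) i) atTop (nhds (U i)) :=
    fun i => tendsto_pi_nhds.mp hUtend i
  have hev : ∀ j : Fin d, Continuous (fun x : EuclideanSpace ℝ (Fin d) => x j) :=
    fun j => (continuous_apply j).comp (PiLp.continuousLinearEquiv 2 ℝ _).continuous
  have hcomp2 : ∀ (i j : Fin d), Tendsto (fun n => u (θ n) i j) atTop (nhds (U i j)) :=
    fun i j => ((hev j).tendsto (U i)).comp (hcoord i)
  -- limit frame is orthonormal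
  have honU : Orthonormal ℝ U := by
    rw [orthonormal_iff_ite]
    intro i j
    by_cases hij : i = j
    · subst hij
      simp only [if_pos rfl]
      rw [real_inner_self_eq_norm_sq]
      have : U i ∈ Metric.sphere (0 : EuclideanSpace ℝ (Fin d)) 1 :=
        (Set.mem_univ_pi.mp hU) i
      rw [mem_sphere_zero_iff_norm] at this
      rw [this]; norm_num
    · simp only [if_neg hij]
      have h1 : Tendsto (fun n => ⟪u (θ n) i, u (θ n) j⟫_ℝ) atTop
          (nhds ⟪U i, U j⟫_ℝ) := (hcoord i).inner (hcoord j)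
      have h2 : (fun n => ⟪u (θ n) i, u (θ n) j⟫_ℝ) = fun _ => (0 : ℝ) := by
        funext n; exact horth (θ n) i j hij
      rw [h2] at h1
      exact (tendsto_nhds_unique tendsto_const_nhds h1).symm
  -- the constant root-count profile
  set m : Fin d → ℕ := fun i => (Finset.univ.filter fun k : Fin (2 ^ d - 1) => w k = i).card
    with hm
  have hsum : ∑ i, m i = 2 ^ d - 1 := by
    rw [hm]
    have := Finset.card_eq_sum_card_fiberwise
      (f := fun k : Fin (2 ^ d - 1) => w k) (s := Finset.univ) (t := Finset.univ)
      (fun x _ => Finset.mem_univ _)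
    rw [Finset.card_univ, Fintype.card_fin] at this
    exact this.symm
  -- support property of the limit frame
  have hsupp : ∀ i, ∀ j : Fin d, d + 1 ≤ (j : ℕ) + m i → U i j = 0 := by
    intro i
    set F : Finset (Fin (2 ^ d - 1)) := Finset.univ.filter (fun k => w k = i) with hF
    have hFcard : F.card = m i := rfl
    set emb := F.orderEmbOfFin hFcard with hemb
    -- sorted roots of P for each n
    have hProots : ∀ n, SortedRoots (P d (u (θ n) i) (c (θ n) i)) (m i)
        (Set.Ioi ((θ n : ℝ) + 1)) := by
      intro n
      refine ⟨fun a => if h : a < m i then R (θ n) ((emb ⟨a, h⟩ : Fin (2 ^ d - 1)) : ℕ)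
        else 0, ?_, ?_⟩
      · intro a b hab hb
        dsimp only
        rw [dif_pos (by omega : a < m i), dif_pos hb]
        apply hRmono (θ n) _ _ _ (emb ⟨b, hb⟩).2
        exact emb.strictMono (by simp [Fin.lt_def]; omega)
      · intro a ha
        dsimp only
        rw [dif_pos ha]
        have hmem' : emb ⟨a, ha⟩ ∈ F := Finset.orderEmbOfFin_mem F hFcard _
        have hwk : w (emb ⟨a, ha⟩) = i := (Finset.mem_filter.mp hmem').2
        have hIk : I (θ n) ((emb ⟨a, ha⟩ : Fin (2 ^ d - 1)) : ℕ) = i :=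
          (congrFun (hVθ n) (emb ⟨a, ha⟩)).trans hwk
        have := hRprop (θ n) ((emb ⟨a, ha⟩ : Fin (2 ^ d - 1)) : ℕ) (emb ⟨a, ha⟩).2
        rw [hIk] at this
        exact ⟨this.1, this.2⟩
    -- Rolle: roots of Q
    have hQroots : ∀ n, SortedRoots (Q d (u (θ n) i)) (m i - 1)
        (Set.Ioi ((θ n : ℝ) + 1)) := by
      intro n
      obtain ⟨r, hrmono, hr⟩ := hProots n
      obtain ⟨r', hr'mono, hr'⟩ := rolle_step (hasDerivAt_P d (u (θ n) i) (c (θ n) i))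
        hrmono (fun a ha => (hr a ha).2)
      refine ⟨r', hr'mono, fun a ha => ⟨?_, (hr' a ha).2⟩⟩
      have h1 := (hr' a ha).1
      have h2 := (hr a (by omega)).1
      exact lt_trans h2 h1.1
    -- reversed roots
    have hEroots : ∀ n, SortedRoots (E d (brev d (u (θ n) i))) (m i - 1)
        (Set.Ioc 0 (1 / ((θ n : ℝ) + 1))) := by
      intro n
      obtain ⟨r, hrmono, hr⟩ := hQroots n
      have hpos : ∀ a, a < m i - 1 → (0 : ℝ) < r a := by
        intro a ha
        have h1 : (θ n : ℝ) + 1 < r a := (hr a ha).1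
        have h0 : (0 : ℝ) ≤ (θ n : ℕ) := Nat.cast_nonneg _
        linarith
      refine ⟨fun a => 1 / r (m i - 1 - 1 - a), ?_, ?_⟩
      · intro a b hab hb
        have h1 : r (m i - 1 - 1 - b) < r (m i - 1 - 1 - a) :=
          hrmono _ _ (by omega) (by omega)
        have hp1 := hpos _ (by omega : m i - 1 - 1 - b < m i - 1)
        rw [div_lt_div_iff₀ (hpos _ (by omega)) hp1]
        nlinarith
      · intro a ha
        have hra := hr (m i - 1 - 1 - a) (by omega)
        have hp := hpos _ (by omega : m i - 1 - 1 - a < m i - 1)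
        refine ⟨⟨by positivity, ?_⟩, brev_root d _ hp hra.2⟩
        apply div_le_div_of_nonneg_left (by norm_num) (by positivity)
        exact le_of_lt hra.1
    -- limit of coefficients
    have hlim : ∀ e, e < m i - 1 → brev d (U i) e = 0 := by
      apply lim_coeff (D := d) (b := fun n => brev d (u (θ n) i)) (bl := brev d (U i))
        (ε := fun n => 1 / ((θ n : ℝ) + 1))
      · intro n j hj
        exact brev_zero d _ j hj
      · intro j
        by_cases hjd : j < d
        · simp only [brev, if_pos hjd]
          apply Tendsto.const_mul
          have hlt : d - 1 - j < d := by omega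
          simp only [A, dif_pos hlt]
          exact hcomp2 i ⟨d - 1 - j, hlt⟩
        · simp only [brev, if_neg hjd]
          exact tendsto_const_nhds
      · intro n
        positivity
      · apply squeeze_zero (fun n => by positivity)
          (g := fun n : ℕ => 1 / ((n : ℝ) + 1))
        · intro n
          apply div_le_div_of_nonneg_left (by norm_num) (by positivity)
          have hle : n ≤ θ n := hθ.le_apply
          exact_mod_cast Nat.succ_le_succ hle
        · exact tendsto_one_div_add_atTop_nhds_zero_nat
      · exact hEroots
    -- translate into coordinates
    intro j hj
    have hed : d - 1 - (j : ℕ) < d := by omega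
    have hel : d - 1 - (j : ℕ) < m i - 1 := by
      have := j.2
      omega
    have h0 := hlim _ hel
    simp only [brev, if_pos hed] at h0
    have hne : ((d - (d - 1 - (j : ℕ)) : ℕ) : ℝ) ≠ 0 := by
      have : 0 < d - (d - 1 - (j : ℕ)) := by omega
      exact_mod_cast Nat.pos_iff_ne_zero.mp this
    have h1 : A d (U i) (d - 1 - (d - 1 - (j : ℕ))) = 0 :=
      (mul_eq_zero.mp h0).resolve_left hne
    have he : d - 1 - (d - 1 - (j : ℕ)) = (j : ℕ) := by
      have := j.2
      omega
    rw [he] at h1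
    simp only [A, dif_pos j.2] at h1
    rwa [Fin.eta] at h1
  -- combinatorial contradiction
  exact comb d hd U honU m hsum hsupp

end NOE

/-- For every `d ≥ 3` there is `M > 0` such that every nonzero finite Borel
measure on `ℝ^d` supported on the tail `Γ = {γ(t) : t ≥ M}` of the moment curve admits no
orthogonal equipartition by `d` mutually orthogonal hyperplanes. -/
theorem no_orthogonal_equipartition_of_supported_on_tail (d : ℕ) (hd : 3 ≤ d) :
    ∃ M : ℝ, 0 < M ∧
      ∀ μ : Measure (EuclideanSpace ℝ (Fin d)), IsFiniteMeasure μ → μ ≠ 0 →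
        μ (momentCurve d '' Set.Ici M)ᶜ = 0 →
        ¬ ∃ (u : Fin d → EuclideanSpace ℝ (Fin d)) (c : Fin d → ℝ),
            (∀ i, ‖u i‖ = 1) ∧ (∀ i j, i ≠ j → ⟪u i, u j⟫_ℝ = 0) ∧
            ∀ s : Fin d → ℝ, (∀ i, s i = 1 ∨ s i = -1) →
              μ {x | ∀ i, s i * (⟪x, u i⟫_ℝ - c i) > 0} = μ Set.univ / 2 ^ d := by
  obtain ⟨M, hM, hkey⟩ := NOE.key d hd
  refine ⟨M, hM, ?_⟩
  rintro μ hfin hne hsupp ⟨u, c, hn, ho, heq⟩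
  obtain ⟨σ, hσ⟩ := hkey u c hn ho
  set s : Fin d → ℝ := fun i => if σ i then 1 else -1 with hsdef
  have hs : ∀ i, s i = 1 ∨ s i = -1 := by
    intro i
    by_cases h : σ i <;> simp [hsdef, h]
  have h1 := heq s hs
  have hsub : {x : EuclideanSpace ℝ (Fin d) | ∀ i, s i * (⟪x, u i⟫_ℝ - c i) > 0}
      ⊆ (momentCurve d '' Set.Ici M)ᶜ := by
    intro x hx hmem
    obtain ⟨t, ht, rfl⟩ := hmem
    obtain ⟨i, hi⟩ := hσ t ht
    exact hi (hx i)
  have h0 : μ {x : EuclideanSpace ℝ (Fin d) | ∀ i, s i * (⟪x, u i⟫_ℝ - c i) > 0} = 0 :=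
    measure_mono_null hsub hsupp
  rw [h0] at h1
  have huniv : μ Set.univ ≠ 0 := by
    simpa [Measure.measure_univ_eq_zero] using hne
  have h2 : μ Set.univ / 2 ^ d ≠ 0 := by
    rw [ne_eq, ENNReal.div_eq_zero_iff]
    push_neg
    exact ⟨huniv, ENNReal.pow_ne_top ENNReal.ofNat_ne_top⟩
  exact h2 h1.symm
end

section
/- For every d ≥ 2 there is a number M > 0 such that the following holds: if H_1, H_2, …, H_d are mutually orthogonal hyperplanes in ℝ^d, then the set Γ = {γ(t) : t ≥ M} intersects some H_i in at most one point. -/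
open scoped InnerProductSpace

open Finset in
lemma rolle_poly {d : ℕ} (v : Fin d → ℝ) {a b : ℝ} (hab : a < b)
    (h : ∑ k : Fin d, a ^ ((k : ℕ) + 1) * v k = ∑ k : Fin d, b ^ ((k : ℕ) + 1) * v k) :
    ∃ s ∈ Set.Ioo a b, ∑ k : Fin d, (((k : ℕ) + 1 : ℝ) * s ^ (k : ℕ)) * v k = 0 := by
  have hder : ∀ t : ℝ, HasDerivAt (fun t : ℝ => ∑ k : Fin d, t ^ ((k : ℕ) + 1) * v k)
      (∑ k : Fin d, (((k : ℕ) + 1 : ℝ) * t ^ (k : ℕ)) * v k) t := by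
    intro t
    apply HasDerivAt.fun_sum
    intro k _
    have := (hasDerivAt_pow ((k : ℕ) + 1) t).mul_const (v k)
    simpa using this
  have hcont : ContinuousOn (fun t : ℝ => ∑ k : Fin d, t ^ ((k : ℕ) + 1) * v k)
      (Set.Icc a b) := fun x _ => (hder x).continuousAt.continuousWithinAt
  obtain ⟨s, hs, hs0⟩ := exists_hasDerivAt_eq_zero hab hcont h (fun x _ => hder x)
  exact ⟨s, hs, hs0⟩

open Finset in
lemma top_coeff_small {d : ℕ} (hd : 2 ≤ d) (a : Fin d → ℝ) (ha : ∀ k, |a k| ≤ 1)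
    {s : ℝ} (hs : ((d : ℝ)) ^ 3 ≤ s)
    (hz : ∑ k : Fin d, (((k : ℕ) + 1 : ℝ) * s ^ (k : ℕ)) * a k = 0) :
    |a ⟨d - 1, by omega⟩| ≤ 1 / (d : ℝ) ^ 2 := by
  set L : Fin d := ⟨d - 1, by omega⟩ with hLdef
  have hd2 : (2:ℝ) ≤ (d:ℝ) := by exact_mod_cast hd
  have hdpos : (0:ℝ) < d := by linarith
  have hs1 : (1:ℝ) ≤ s := by
    have h8 : (2:ℝ)^3 ≤ (d:ℝ)^3 := pow_le_pow_left₀ (by norm_num) hd2 3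
    nlinarith
  have hs0 : (0:ℝ) < s := by linarith
  have hLv : (L:ℕ) = d - 1 := rfl
  have hLcast : ((L:ℕ) + 1 : ℝ) = d := by
    have h1 : ((L:ℕ) + 1 : ℕ) = d := by rw [hLv]; omega
    exact_mod_cast h1
  have hpow : s ^ (L:ℕ) = s ^ (d-2) * s := by
    rw [hLv, show d - 1 = (d-2) + 1 by omega, pow_succ]
  have hsplit := Finset.add_sum_erase Finset.univ
      (fun k : Fin d => (((k:ℕ)+1 : ℝ) * s ^ (k:ℕ)) * a k) (Finset.mem_univ L)
  rw [hz] at hsplit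
  have hkey : (((L:ℕ)+1:ℝ) * s ^ (L:ℕ)) * a L
      = -∑ k ∈ Finset.univ.erase L, (((k:ℕ)+1:ℝ) * s ^ (k:ℕ)) * a k :=
    eq_neg_of_add_eq_zero_left hsplit
  have hterm : ∀ k ∈ Finset.univ.erase L,
      |(((k:ℕ)+1:ℝ) * s ^ (k:ℕ)) * a k| ≤ (d:ℝ) * s ^ (d-2) := by
    intro k hk
    have hkL : k ≠ L := (Finset.mem_erase.mp hk).1
    have hkd : (k:ℕ) ≤ d - 2 := by
      have := k.isLt
      have : (k:ℕ) ≠ d - 1 := fun h => hkL (Fin.ext (by rw [hLv, h]))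
      omega
    have h1 : ((k:ℕ)+1:ℝ) ≤ d := by
      have : (k:ℕ) + 1 ≤ d := by omega
      exact_mod_cast this
    have h2 : s ^ (k:ℕ) ≤ s ^ (d-2) := pow_le_pow_right₀ hs1 hkd
    have h3 : |a k| ≤ 1 := ha k
    rw [abs_mul]
    have h4 : |(((k:ℕ)+1:ℝ) * s ^ (k:ℕ))| = ((k:ℕ)+1:ℝ) * s ^ (k:ℕ) :=
      abs_of_nonneg (by positivity)
    rw [h4]
    calc (((k:ℕ)+1:ℝ) * s ^ (k:ℕ)) * |a k| ≤ ((d:ℝ) * s ^ (d-2)) * 1 := by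
          apply mul_le_mul _ h3 (abs_nonneg _) (by positivity)
          exact mul_le_mul h1 h2 (by positivity) (by linarith)
      _ = (d:ℝ) * s ^ (d-2) := by ring
  have hbound : |∑ k ∈ Finset.univ.erase L, (((k:ℕ)+1:ℝ) * s ^ (k:ℕ)) * a k|
      ≤ (d:ℝ) * ((d:ℝ) * s ^ (d-2)) := by
    calc |∑ k ∈ Finset.univ.erase L, (((k:ℕ)+1:ℝ) * s ^ (k:ℕ)) * a k|
        ≤ ∑ k ∈ Finset.univ.erase L, |(((k:ℕ)+1:ℝ) * s ^ (k:ℕ)) * a k| :=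
          Finset.abs_sum_le_sum_abs _ _
      _ ≤ ∑ _k ∈ Finset.univ.erase L, (d:ℝ) * s ^ (d-2) := Finset.sum_le_sum hterm
      _ = ((Finset.univ.erase L).card : ℝ) * ((d:ℝ) * s ^ (d-2)) := by
          rw [Finset.sum_const, nsmul_eq_mul]
      _ ≤ (d:ℝ) * ((d:ℝ) * s ^ (d-2)) := by
          apply mul_le_mul_of_nonneg_right _ (by positivity)
          have : (Finset.univ.erase L).card ≤ d := by
            simpa using (Finset.card_le_card (Finset.erase_subset _ _)).trans (by simp)
          exact_mod_cast this
  have hP : (0:ℝ) < s ^ (d-2) := pow_pos hs0 _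
  have habs : ((d:ℝ) * (s ^ (d-2) * s)) * |a L| ≤ (d:ℝ) * ((d:ℝ) * s ^ (d-2)) := by
    have := hkey ▸ congrArg abs hkey
    have h5 : |(((L:ℕ)+1:ℝ) * s ^ (L:ℕ)) * a L|
        = ((d:ℝ) * (s ^ (d-2) * s)) * |a L| := by
      rw [abs_mul, abs_of_nonneg (by positivity : (0:ℝ) ≤ ((L:ℕ)+1:ℝ) * s ^ (L:ℕ)),
        hLcast, hpow]
    calc ((d:ℝ) * (s ^ (d-2) * s)) * |a L|
        = |(((L:ℕ)+1:ℝ) * s ^ (L:ℕ)) * a L| := h5.symm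
      _ = |∑ k ∈ Finset.univ.erase L, (((k:ℕ)+1:ℝ) * s ^ (k:ℕ)) * a k| := by
          rw [hkey, abs_neg]
      _ ≤ (d:ℝ) * ((d:ℝ) * s ^ (d-2)) := hbound
  rw [le_div_iff₀ (by positivity)]
  have h6 : ((d:ℝ) * s ^ (d-2) * |a L|) * (d:ℝ)^3 ≤ ((d:ℝ) * s ^ (d-2) * |a L|) * s :=
    mul_le_mul_of_nonneg_left hs (by positivity)
  have h7 : (|a L| * (d:ℝ)^2) * ((d:ℝ)^2 * s ^ (d-2)) ≤ 1 * ((d:ℝ)^2 * s ^ (d-2)) := by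
    nlinarith [h6, habs]
  exact le_of_mul_le_mul_right h7 (by positivity)

/-- For every `d ≥ 2` there is `M > 0` such that whenever
`H_1, …, H_d` are mutually orthogonal hyperplanes in `ℝ^d`, the tail
`Γ = {γ(t) : t ≥ M}` of the moment curve meets some `H_i` in at most one point. -/
theorem exists_hyperplane_meeting_tail_in_at_most_one_point (d : ℕ) (hd : 2 ≤ d) :
    ∃ M : ℝ, 0 < M ∧
      ∀ (u : Fin d → EuclideanSpace ℝ (Fin d)) (c : Fin d → ℝ),
        (∀ i, ‖u i‖ = 1) → (∀ i j, i ≠ j → ⟪u i, u j⟫_ℝ = 0) →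
        ∃ i : Fin d,
          Set.Subsingleton (momentCurve d '' Set.Ici M ∩ {x | ⟪x, u i⟫_ℝ = c i}) := by
  have hd2 : (2:ℝ) ≤ (d:ℝ) := by exact_mod_cast hd
  have hd0 : (0:ℝ) < (d:ℝ) := by linarith
  refine ⟨(d:ℝ)^3, by positivity, ?_⟩
  intro u c hnorm horth
  by_contra hcon
  push_neg at hcon
  have hcoord : ∀ j (k : Fin d), |u j k| ≤ 1 := by
    intro j k
    have h1 : ⟪EuclideanSpace.single k (1:ℝ), u j⟫_ℝ = u j k := by
      simp [EuclideanSpace.inner_single_left]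
    have h2 := abs_real_inner_le_norm (EuclideanSpace.single k (1:ℝ)) (u j)
    rw [h1] at h2
    simpa [hnorm j, EuclideanSpace.norm_single] using h2
  have hip : ∀ (i : Fin d) (t : ℝ),
      ⟪momentCurve d t, u i⟫_ℝ = ∑ k : Fin d, t ^ ((k:ℕ)+1) * u i k := by
    intro i t
    simp [momentCurve, PiLp.inner_apply, RCLike.inner_apply, mul_comm]
  have key : ∀ i : Fin d, |u i ⟨d - 1, by omega⟩| ≤ 1 / (d : ℝ) ^ 2 := by
    intro i
    obtain ⟨x, ⟨hx1, hx2⟩, y, ⟨hy1, hy2⟩, hxy⟩ :=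
      hcon i
    obtain ⟨t1, ht1, rfl⟩ := hx1
    obtain ⟨t2, ht2, rfl⟩ := hy1
    have hx2' : ⟪momentCurve d t1, u i⟫_ℝ = c i := hx2
    have hy2' : ⟪momentCurve d t2, u i⟫_ℝ = c i := hy2
    have htne : t1 ≠ t2 := fun h => hxy (by rw [h])
    have heq : ∑ k : Fin d, t1 ^ ((k:ℕ)+1) * u i k
        = ∑ k : Fin d, t2 ^ ((k:ℕ)+1) * u i k := by
      rw [← hip, ← hip, hx2', hy2']
    rcases htne.lt_or_gt with hlt | hlt
    · obtain ⟨s, hsmem, hs0⟩ := rolle_poly (u i) hlt heq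
      exact top_coeff_small hd (u i) (hcoord i) (le_trans ht1 hsmem.1.le) hs0
    · obtain ⟨s, hsmem, hs0⟩ := rolle_poly (u i) hlt heq.symm
      exact top_coeff_small hd (u i) (hcoord i) (le_trans ht2 hsmem.1.le) hs0
  -- Parseval
  set L : Fin d := ⟨d - 1, by omega⟩ with hLdef
  have hon : Orthonormal ℝ u := ⟨hnorm, horth⟩
  have hcard : Fintype.card (Fin d) = Module.finrank ℝ (EuclideanSpace ℝ (Fin d)) := by
    simp
  haveI : Nonempty (Fin d) := ⟨⟨0, by omega⟩⟩
  let b0 := basisOfOrthonormalOfCardEqFinrank hon hcard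
  have hb0 : ⇑b0 = u := coe_basisOfOrthonormalOfCardEqFinrank hon hcard
  let B := b0.toOrthonormalBasis (by rw [hb0]; exact hon)
  have hB : ∀ i, B i = u i := by
    intro i
    have := Module.Basis.coe_toOrthonormalBasis b0 (by rw [hb0]; exact hon)
    rw [show B = b0.toOrthonormalBasis (by rw [hb0]; exact hon) from rfl]
    rw [show (b0.toOrthonormalBasis (by rw [hb0]; exact hon) : Fin d → _) = ⇑b0 from this,
      hb0]
  have hsum := B.sum_inner_mul_inner (EuclideanSpace.single L (1:ℝ))
    (EuclideanSpace.single L (1:ℝ))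
  have hterm : ∀ i : Fin d,
      ⟪EuclideanSpace.single L (1:ℝ), B i⟫_ℝ * ⟪B i, EuclideanSpace.single L (1:ℝ)⟫_ℝ
      = u i L * u i L := by
    intro i
    rw [hB i]
    simp [EuclideanSpace.inner_single_left, EuclideanSpace.inner_single_right]
  have hself : ⟪EuclideanSpace.single L (1:ℝ),
      (EuclideanSpace.single L (1:ℝ) : EuclideanSpace ℝ (Fin d))⟫_ℝ = 1 := by
    simp [EuclideanSpace.inner_single_left]
  rw [Finset.sum_congr rfl (fun i _ => hterm i), hself] at hsum
  have hle : ∑ i : Fin d, u i L * u i L ≤ (d:ℝ) * (1/(d:ℝ)^2 * (1/(d:ℝ)^2)) := by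
    calc ∑ i : Fin d, u i L * u i L
        ≤ ∑ _i : Fin d, (1/(d:ℝ)^2 * (1/(d:ℝ)^2)) := by
          apply Finset.sum_le_sum
          intro i _
          have := mul_self_le_mul_self (abs_nonneg (u i L)) (key i)
          rwa [abs_mul_abs_self] at this
      _ = (d:ℝ) * (1/(d:ℝ)^2 * (1/(d:ℝ)^2)) := by
          rw [Finset.sum_const, nsmul_eq_mul]; simp
  rw [hsum] at hle
  have h10 : (1:ℝ) ≤ (d:ℝ) * (1/(d:ℝ)^2 * (1/(d:ℝ)^2)) := hle
  have hle := h10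
  have : (d:ℝ)^4 ≤ (d:ℝ) := by
    have h9 : (0:ℝ) < (d:ℝ)^2 := by positivity
    rw [div_mul_div_comm, one_mul, mul_one_div, le_div_iff₀ (by positivity)] at hle
    nlinarith [hle]
  have h8 : (2:ℝ)^3 ≤ (d:ℝ)^3 := pow_le_pow_left₀ (by norm_num) hd2 3
  nlinarith [this, mul_le_mul_of_nonneg_left h8 hd0.le]
end

section
/- Let H_1, …, H_d be hyperplanes in ℝ^d, H_i = {x : ⟨x, u_i⟩ = c_i}, and let f : [0, ∞) → ℝ^d be a continuous injective map whose image meets every one of the 2^d open sign regions R_s = {x : s_i·(⟨x, u_i⟩ − c_i) > 0 for all i}, s ∈ {−1, 1}^d. Then the image of f intersects H_1 ∪ ⋯ ∪ H_d in at least 2^d − 1 distinct points. -/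
open scoped InnerProductSpace

set_option maxHeartbeats 1000000

/-- Let `H_1, …, H_d` be hyperplanes in `ℝ^d`, and let `f : [0,∞) → ℝ^d`
be a continuous injective map whose image meets each of the `2^d` open sign regions
determined by the hyperplanes. Then the image of `f` meets `H_1 ∪ ⋯ ∪ H_d` in at least
`2^d − 1` points. -/
theorem image_meets_hyperplanes_in_many_points (d : ℕ)
    (u : Fin d → EuclideanSpace ℝ (Fin d)) (c : Fin d → ℝ) (hu : ∀ i, ‖u i‖ = 1)
    (f : ℝ → EuclideanSpace ℝ (Fin d))
    (hcont : ContinuousOn f (Set.Ici 0)) (hinj : Set.InjOn f (Set.Ici 0))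
    (hmeets : ∀ s : Fin d → ℝ, (∀ i, s i = 1 ∨ s i = -1) →
      ∃ x ∈ f '' Set.Ici 0, ∀ i, s i * (⟪x, u i⟫_ℝ - c i) > 0) :
    (2 ^ d - 1 : ℕ) ≤ (f '' Set.Ici 0 ∩ ⋃ i, {x | ⟪x, u i⟫_ℝ = c i}).encard := by
  classical
  set A := f '' Set.Ici 0 ∩ ⋃ i, {x | ⟪x, u i⟫_ℝ = c i} with hA
  -- choose a time in each sign region
  have key : ∀ b : Fin d → Bool, ∃ t : ℝ, 0 ≤ t ∧
      ∀ i, (if b i then (1:ℝ) else -1) * (⟪f t, u i⟫_ℝ - c i) > 0 := by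
    intro b
    obtain ⟨x, hx, hxs⟩ := hmeets (fun i => if b i then 1 else -1)
      (fun i => by by_cases h : b i <;> simp [h])
    obtain ⟨tt, htt, rfl⟩ := hx
    exact ⟨tt, htt, hxs⟩
  choose t ht hts using key
  have tinj : Function.Injective t := by
    intro b b' h
    funext i
    by_contra hne
    have h1 := hts b i
    have h2 := hts b' i
    rw [h] at h1
    cases hb : b i <;> cases hb' : b' i <;> simp_all <;> nlinarith
  set n := 2 ^ d with hn
  have hn1 : 1 ≤ n := Nat.one_le_two_pow
  set T : Finset ℝ := Finset.univ.image t with hTdef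
  have hT : T.card = n := by
    rw [hTdef, Finset.card_image_of_injective _ tinj, Finset.card_univ]
    simp [hn]
  have hT0 : ∀ x ∈ T, (0:ℝ) ≤ x := by
    intro x hx
    rw [hTdef, Finset.mem_image] at hx
    obtain ⟨b, -, rfl⟩ := hx
    exact ht b
  set e := T.orderIsoOfFin hT with he
  -- between consecutive chosen times there is a hyperplane crossing
  have cross : ∀ k : Fin (n - 1), ∃ τ : ℝ,
      (e ⟨k, by omega⟩ : ℝ) < τ ∧ τ < (e ⟨(k:ℕ)+1, by have := k.isLt; omega⟩ : ℝ) ∧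
      ∃ i, ⟪f τ, u i⟫_ℝ = c i := by
    intro k
    set i1 : Fin n := ⟨k, by omega⟩ with hi1
    set i2 : Fin n := ⟨(k:ℕ)+1, by have := k.isLt; omega⟩ with hi2
    set a : ℝ := (e i1 : ℝ) with ha
    set b : ℝ := (e i2 : ℝ) with hb
    have hab : a < b := by
      have : e i1 < e i2 := e.strictMono (by simp [hi1, hi2, Fin.lt_def])
      exact_mod_cast this
    have hamem : a ∈ T := (e i1).2
    have hbmem : b ∈ T := (e i2).2
    rw [hTdef, Finset.mem_image] at hamem hbmem
    obtain ⟨b1, -, hb1⟩ := hamem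
    obtain ⟨b2, -, hb2⟩ := hbmem
    have hbne : b1 ≠ b2 := by
      rintro rfl; rw [hb1] at hb2; exact absurd hb2 hab.ne
    have : ∃ i, b1 i ≠ b2 i := by
      by_contra hcon
      push_neg at hcon
      exact hbne (funext hcon)
    obtain ⟨i, hi⟩ := this
    have ha0 : (0:ℝ) ≤ a := hT0 _ (e i1).2
    set g : ℝ → ℝ := fun x => ⟪f x, u i⟫_ℝ - c i with hg
    have hgc : ContinuousOn g (Set.Icc a b) := by
      apply ContinuousOn.sub _ continuousOn_const
      exact ContinuousOn.inner (hcont.mono (fun x hx => le_trans ha0 hx.1))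
        continuousOn_const
    have h1 := hts b1 i
    have h2 := hts b2 i
    rw [hb1] at h1
    rw [hb2] at h2
    cases hc1 : b1 i <;> cases hc2 : b2 i <;> rw [hc1] at h1 hi <;> rw [hc2] at h2 hi
    · exact absurd rfl hi
    · -- b1 i = false : g a < 0 ; b2 i = true : g b > 0
      rw [if_neg (by decide)] at h1
      rw [if_pos rfl] at h2
      have hga : g a < 0 := by simp only [hg]; nlinarith
      have hgb : 0 < g b := by simp only [hg]; nlinarith
      have := intermediate_value_Ioo hab.le hgc (Set.mem_Ioo.mpr ⟨hga, hgb⟩)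
      obtain ⟨τ, hτ, hτ0⟩ := this
      exact ⟨τ, hτ.1, hτ.2, i, by simpa [hg, sub_eq_zero] using hτ0⟩
    · -- b1 i = true : g a > 0 ; b2 i = false : g b < 0
      rw [if_pos rfl] at h1
      rw [if_neg (by decide)] at h2
      have hga : 0 < g a := by simp only [hg]; nlinarith
      have hgb : g b < 0 := by simp only [hg]; nlinarith
      have := intermediate_value_Ioo' hab.le hgc (Set.mem_Ioo.mpr ⟨hgb, hga⟩)
      obtain ⟨τ, hτ, hτ0⟩ := this
      exact ⟨τ, hτ.1, hτ.2, i, by simpa [hg, sub_eq_zero] using hτ0⟩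
    · exact absurd rfl hi
  choose τ hτ1 hτ2 hτ3 using cross
  have hτ0 : ∀ k, (0:ℝ) ≤ τ k := fun k =>
    le_trans (hT0 _ (e ⟨k, by omega⟩).2) (hτ1 k).le
  have τmono : StrictMono τ := by
    intro k k' hkk'
    calc τ k < (e ⟨(k:ℕ)+1, by have := k.isLt; omega⟩ : ℝ) := hτ2 k
    _ ≤ (e ⟨k', by omega⟩ : ℝ) := by
        have : (⟨(k:ℕ)+1, by have := k.isLt; omega⟩ : Fin n) ≤ ⟨k', by omega⟩ := by
          simp [Fin.le_def]; exact hkk'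
        exact_mod_cast e.monotone this
    _ < τ k' := hτ1 k'
  set p : Fin (n-1) → EuclideanSpace ℝ (Fin d) := fun k => f (τ k) with hp
  have pinj : Function.Injective p := by
    intro k k' h
    exact τmono.injective (hinj (hτ0 k) (hτ0 k') h)
  have pmem : ∀ k, p k ∈ A := by
    intro k
    refine ⟨⟨τ k, hτ0 k, rfl⟩, ?_⟩
    obtain ⟨i, hi⟩ := hτ3 k
    exact Set.mem_iUnion.mpr ⟨i, hi⟩
  have hsub : ↑(Finset.univ.image p) ⊆ A := by
    intro x hx
    simp only [Finset.coe_image, Finset.coe_univ, Set.image_univ] at hx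
    obtain ⟨k, rfl⟩ := hx
    exact pmem k
  calc ((n - 1 : ℕ) : ℕ∞) = (Finset.univ.image p).card := by
        rw [Finset.card_image_of_injective _ pinj, Finset.card_univ, Fintype.card_fin]
    _ = (↑(Finset.univ.image p) : Set _).encard := by
        rw [Set.encard_coe_eq_coe_finsetCard]
    _ ≤ A.encard := Set.encard_le_encard hsub
end
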